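/- arXiv:1801.09275 — 5 statements merged into one kernel-verified Lean document; each statement's English description precedes it below -/
import Mathlib

section
/- Let F be a field and f1,...,fm in F[x1,...,xn]. A polynomial Q in the algebraic closure A of F, Q ∈ A[y1,...,ym], vanishes on the image of the polynomial map f: A^n → A^m, a ↦ (f1(a),...,fm(a)), if and only if Q(f1,...,fm) = 0 as a polynomial, i.e., Q is an annihilator for f1,...,fm. -/
open MvPolynomial

/-- A polynomial `Q` over the algebraic closure `A` vanishes on the image of the polynomial
map `a ↦ (f 1 (a), ..., f m (a)) : A^n → A^m` iff `Q` is an annihilator of `f 1, ..., f m`. -/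
theorem vanishes_on_image_iff_annihilator {F A : Type*} [Field F] [Field A] [Algebra F A]
    [IsAlgClosed A] [Algebra.IsAlgebraic F A] {n m : ℕ}
    (f : Fin m → MvPolynomial (Fin n) F) (Q : MvPolynomial (Fin m) A) :
    (∀ a : Fin n → A,
        eval (fun i => eval a ((f i).map (algebraMap F A))) Q = 0) ↔
    aeval (fun i => (f i).map (algebraMap F A)) Q = 0 := by
  have key : ∀ a : Fin n → A,
      eval a (aeval (fun i => (f i).map (algebraMap F A)) Q) =
      eval (fun i => eval a ((f i).map (algebraMap F A))) Q := by
    intro a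
    rw [show aeval (fun i => (f i).map (algebraMap F A)) Q
        = bind₁ (fun i => (f i).map (algebraMap F A)) Q from rfl,
      hom_bind₁]
    exact eval₂Hom_congr (by ext c; simp) rfl rfl
  constructor
  · intro h
    apply MvPolynomial.funext
    intro a
    rw [key a, map_zero, h a]
  · intro h a
    rw [← key a, h, map_zero]
end

section
/- Let F ⊆ A be a field extension with A algebraically closed, and let f1,...,fm ∈ F[x1,...,xn]. There exists an annihilator of (f1,...,fm) over A with nonzero constant term if and only if there exists an annihilator over F with nonzero constant term. -/
/-!
Pick an `F`-linear functional `φ : A → F` sending the constant term of the annihilator over `A`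
to `1`, and apply it to every coefficient. Since `φ` is `F`-linear and the `f i` have coefficients
in `F`, this commutes with evaluation at `f`, so it produces an annihilator over `F` with
constant term `1`. The converse is the same argument for the inclusion `F → A`.
-/

open MvPolynomial

namespace MvPolynomial

variable {R A B σ τ : Type*} [CommSemiring R] [CommSemiring A] [CommSemiring B]
  [Algebra R A] [Algebra R B] (φ : A →ₗ[R] B)

theorem addMonoidAlgebraMap_C (a : A) :
    AddMonoidAlgebra.map φ.toAddMonoidHom (C a : MvPolynomial σ A) = C (φ a) :=
  AddMonoidAlgebra.map_single _ _ _

theorem constantCoeff_addMonoidAlgebraMap (Q : MvPolynomial σ A) :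
    constantCoeff (AddMonoidAlgebra.map φ.toAddMonoidHom Q) = φ (constantCoeff Q) := by
  simp only [constantCoeff_eq, coeff_addMonoidAlgebraMap, LinearMap.toAddMonoidHom_coe]

theorem addMonoidAlgebraMap_mul_map (u : MvPolynomial τ A) (p : MvPolynomial τ R) :
    AddMonoidAlgebra.map φ.toAddMonoidHom (u * p.map (algebraMap R A)) =
      AddMonoidAlgebra.map φ.toAddMonoidHom u * p.map (algebraMap R B) := by
  classical
  refine MvPolynomial.ext _ _ fun t => ?_
  rw [coeff_addMonoidAlgebraMap, coeff_mul, coeff_mul, map_sum]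
  refine Finset.sum_congr rfl fun x _ => ?_
  simp only [coeff_map, coeff_addMonoidAlgebraMap, ← Algebra.commutes, ← Algebra.smul_def]
  simp

theorem addMonoidAlgebraMap_aeval_map (f : σ → MvPolynomial τ R) (Q : MvPolynomial σ A) :
    AddMonoidAlgebra.map φ.toAddMonoidHom (aeval (fun i => (f i).map (algebraMap R A)) Q) =
      aeval (fun i => (f i).map (algebraMap R B)) (AddMonoidAlgebra.map φ.toAddMonoidHom Q) := by
  induction Q using MvPolynomial.induction_on with
  | C a =>
    rw [aeval_C, algebraMap_eq, addMonoidAlgebraMap_C, addMonoidAlgebraMap_C, aeval_C,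
      algebraMap_eq]
  | add p q hp hq => simp only [AddMonoidAlgebra.map_add, map_add, hp, hq]
  | mul_X p i hp =>
    have hX := addMonoidAlgebraMap_mul_map φ p (X i)
    rw [map_X, map_X] at hX
    rw [map_mul, aeval_X, addMonoidAlgebraMap_mul_map, hp, hX, map_mul, aeval_X]

theorem aeval_addMonoidAlgebraMap_eq_zero {f : σ → MvPolynomial τ R} {Q : MvPolynomial σ A}
    (hQ : aeval (fun i => (f i).map (algebraMap R A)) Q = 0) :
    aeval (fun i => (f i).map (algebraMap R B)) (AddMonoidAlgebra.map φ.toAddMonoidHom Q) = 0 := by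
  rw [← addMonoidAlgebraMap_aeval_map, hQ, AddMonoidAlgebra.map_zero]

end MvPolynomial

theorem annihilator_nonzero_constant_descends_general {F A : Type*} [Field F] [Field A]
    [Algebra F A] {n m : ℕ} (f : Fin m → MvPolynomial (Fin n) F) :
    (∃ Q : MvPolynomial (Fin m) A, Q ≠ 0 ∧
        aeval (fun i => (f i).map (algebraMap F A)) Q = 0 ∧ constantCoeff Q ≠ 0) ↔
    (∃ Q : MvPolynomial (Fin m) F, Q ≠ 0 ∧ aeval f Q = 0 ∧ constantCoeff Q ≠ 0) := by
  have map_self : (fun i => (f i).map (algebraMap F F)) = f := by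
    simp only [Algebra.algebraMap_self, map_id]
  constructor
  · rintro ⟨Q, -, hQ, hc⟩
    obtain ⟨φ, hφ⟩ := Module.Projective.exists_dual_eq_one F hc
    have hc' : constantCoeff (AddMonoidAlgebra.map φ.toAddMonoidHom Q) ≠ 0 := by
      rw [constantCoeff_addMonoidAlgebraMap, hφ]
      exact one_ne_zero
    refine ⟨_, ne_of_apply_ne constantCoeff (by rwa [map_zero]), ?_, hc'⟩
    simpa only [map_self] using aeval_addMonoidAlgebraMap_eq_zero φ hQ
  · rintro ⟨Q, -, hQ, hc⟩
    have hc' :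
        constantCoeff (AddMonoidAlgebra.map (Algebra.linearMap F A).toAddMonoidHom Q) ≠ 0 := by
      rw [constantCoeff_addMonoidAlgebraMap, Algebra.linearMap_apply]
      exact (map_ne_zero _).mpr hc
    exact ⟨_, ne_of_apply_ne constantCoeff (by rwa [map_zero]),
      aeval_addMonoidAlgebraMap_eq_zero _ (by rwa [map_self]), hc'⟩

/-- For `f 1, ..., f m` with coefficients in `F ⊆ A` (`A` algebraically closed), there is an
annihilator over `A` with nonzero constant term iff there is one over `F`. -/
theorem annihilator_nonzero_constant_descends {F A : Type*} [Field F] [Field A]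
    [Algebra F A] [IsAlgClosed A] {n m : ℕ} (f : Fin m → MvPolynomial (Fin n) F) :
    (∃ Q : MvPolynomial (Fin m) A, Q ≠ 0 ∧
        aeval (fun i => (f i).map (algebraMap F A)) Q = 0 ∧ constantCoeff Q ≠ 0) ↔
    (∃ Q : MvPolynomial (Fin m) F, Q ≠ 0 ∧ aeval f Q = 0 ∧ constantCoeff Q ≠ 0) :=
  annihilator_nonzero_constant_descends_general f
end

section
/- Let A be an algebraically closed field and f1 = f2 = X1, f3 = X1·X2 − 1 in A[X1,X2]. Then every annihilator Q ∈ A[Y1,Y2,Y3] of (f1,f2,f3) is divisible by Y1 − Y2; in particular every annihilator has zero constant term, yet the system f1 = f2 = f3 = 0 has no common zero in A^2. -/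
/-!
Substituting `Y₂ := Y₁` in an annihilator `Q` leaves a polynomial in `Y₁, Y₃` alone that still
annihilates `(X₁, X₁X₂ - 1)`. These two are algebraically independent, because
`(x₁, x₂) ↦ (x₁, x₁x₂ - 1)` hits every point with `x₁ ≠ 0` and such points are Zariski dense.
So the substitution kills `Q`, which is therefore divisible by `Y₁ - Y₂`.
-/

open MvPolynomial

namespace MvPolynomial

variable {R σ : Type*} [CommRing R]

theorem sub_aeval_mem_of_X_sub_mem {I : Ideal (MvPolynomial σ R)} {g : σ → MvPolynomial σ R}
    (hg : ∀ i, X i - g i ∈ I) (p : MvPolynomial σ R) : p - aeval g p ∈ I := by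
  have hmk : (Ideal.Quotient.mkₐ R I).comp (aeval g) = Ideal.Quotient.mkₐ R I :=
    algHom_ext fun i ↦ by simpa [Ideal.Quotient.eq] using I.neg_mem (hg i)
  rw [← Ideal.Quotient.eq, ← Ideal.Quotient.mkₐ_eq_mk R]
  exact (DFunLike.congr_fun hmk p).symm

theorem X_sub_X_dvd_sub_aeval_update [DecidableEq σ] (i j : σ) (p : MvPolynomial σ R) :
    X i - X j ∣ p - aeval (Function.update X j (X i)) p := by
  rw [← Ideal.mem_span_singleton]
  refine sub_aeval_mem_of_X_sub_mem (fun k ↦ ?_) p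
  rcases eq_or_ne k j with rfl | hk
  · rw [Function.update_self, Ideal.mem_span_singleton, ← neg_sub]
    exact neg_dvd.2 dvd_rfl
  · rw [Function.update_of_ne hk, sub_self]
    exact Ideal.zero_mem _

theorem algebraicIndependent_X_zero_X_zero_mul_X_one_sub_one {K : Type*} [Field K] [Infinite K] :
    AlgebraicIndependent K ![(X 0 : MvPolynomial (Fin 2) K), X 0 * X 1 - 1] := by
  rw [algebraicIndependent_iff_injective_aeval, injective_iff_map_eq_zero]
  intro P hP
  refine funext_set_iff (p := P) (q := 0) ![{0}ᶜ, Set.univ] ?_ |>.2 ?_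
  · intro i; fin_cases i
    · exact (Set.finite_singleton 0).infinite_compl
    · exact Set.infinite_univ
  · intro x hx
    have hx0 : x 0 ≠ 0 := hx 0 trivial
    have hpre : (fun i ↦ aeval ![x 0, (x 1 + 1) / x 0]
        (![(X 0 : MvPolynomial (Fin 2) K), X 0 * X 1 - 1] i)) = x := by
      funext i; fin_cases i
      · simp
      · simp [field]
    rw [map_zero, ← aeval_eq_eval, ← hpre, ← comp_aeval_apply, hP, map_zero]

end MvPolynomial

/-- For `f₁ = f₂ = X₁`, `f₃ = X₁X₂ - 1`: every annihilator is divisible by `Y₁ - Y₂` (so has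
zero constant term), yet the system `f₁ = f₂ = f₃ = 0` has no common zero in `A²`. -/
theorem image_not_closed_example {A : Type*} [Field A] [IsAlgClosed A] :
    (∀ Q : MvPolynomial (Fin 3) A,
        aeval ![(X 0 : MvPolynomial (Fin 2) A), X 0, X 0 * X 1 - 1] Q = 0 →
          (X 0 - X 1 : MvPolynomial (Fin 3) A) ∣ Q ∧ constantCoeff Q = 0) ∧
    (¬ ∃ a : Fin 2 → A, eval a (X 0 : MvPolynomial (Fin 2) A) = 0 ∧
        eval a (X 0 * X 1 - 1 : MvPolynomial (Fin 2) A) = 0) := by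
  refine ⟨fun Q hQ ↦ ?_, ?_⟩
  · have hcollapse : rename (![0, 0, 1] : Fin 3 → Fin 2) Q = 0 := by
      refine (algebraicIndependent_X_zero_X_zero_mul_X_one_sub_one (K := A))
        |>.eq_zero_of_aeval_eq_zero _ ?_
      rw [aeval_rename, ← hQ]
      congr 2
      funext i; fin_cases i <;> rfl
    have hdiag : aeval (Function.update (X (R := A)) 1 (X 0)) Q = 0 := by
      rw [← map_zero (rename (R := A) (![0, 2] : Fin 2 → Fin 3)), ← hcollapse, rename_rename,
        rename_eq_aeval]
      congr 2
      funext i; fin_cases i <;> rfl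
    have hdvd := X_sub_X_dvd_sub_aeval_update 0 1 Q
    rw [hdiag, sub_zero] at hdvd
    obtain ⟨R, rfl⟩ := hdvd
    exact ⟨dvd_mul_right _ _, by simp⟩
  · rintro ⟨a, h0, h1⟩
    simp_all
end

section
/- Let F_q be a finite field and f1,...,fn ∈ F_q[x1,...,xn] algebraically dependent with minimal annihilator degree at most D. For an extension F_{q'} and any integer k > 0, the number of points a ∈ F_{q'}^n such that the fiber f^{−1}(f(a)) ⊆ F_{q'}^n has size at most k is at most k·D·q'^{n−1}. -/
/-!
Since `Q(f₁, …, fₙ) = 0`, the image of `F` lies in the zero set of `Q` over `K`, which by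
Schwartz–Zippel has at most `D · q'^(n-1)` points; a point with a small fiber shares its image
with at most `k` points.
-/

open MvPolynomial Finset

lemma card_zeros_le_totalDegree_mul_card_pow {K : Type*} [Field K] [Fintype K] [DecidableEq K]
    {n : ℕ} {P : MvPolynomial (Fin n) K} (hP : P ≠ 0) :
    #{x : Fin n → K | eval x P = 0} ≤ P.totalDegree * Fintype.card K ^ (n - 1) := by
  rcases n with _ | n
  · rw [P.eq_C_of_isEmpty] at hP ⊢
    simp_all
  · have hq : (0 : ℚ≥0) < Fintype.card K := by exact_mod_cast Fintype.card_pos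
    have sz := schwartz_zippel_totalDegree hP univ
    rw [Fintype.piFinset_univ, card_univ, div_le_div_iff₀ (by positivity) hq, pow_succ,
      ← mul_assoc] at sz
    rw [Nat.add_sub_cancel]
    exact_mod_cast le_of_mul_le_mul_right sz hq

lemma eval_map_eq_zero_of_aeval_eq_zero {R S σ ι : Type*} [CommSemiring R] [CommSemiring S]
    [Algebra R S] {f : ι → MvPolynomial σ R} {Q : MvPolynomial ι R} (hQ : aeval f Q = 0)
    (a : σ → S) :
    eval (fun i => eval a ((f i).map (algebraMap R S))) (Q.map (algebraMap R S)) = 0 := by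
  simp only [eval_map, ← aeval_def, ← aeval_bind₁, ← aeval_eq_bind₁, hQ, map_zero]

lemma ncard_setOf_small_fibers_le {α β : Type*} [Fintype α] [DecidableEq β] {F : α → β}
    {T : Finset β} (hF : ∀ a, F a ∈ T) (k : ℕ) :
    {a | {x | F x = F a}.ncard ≤ k}.ncard ≤ k * #T := by
  set S : Finset α := {a | {x | F x = F a}.ncard ≤ k}
  rw [Set.ncard_eq_toFinset_card', Set.toFinset_ofPred]
  refine card_le_mul_card_image_of_maps_to (s := S) (fun a _ => hF a) k fun b _ => ?_
  rcases eq_empty_or_nonempty {a ∈ S | F a = b} with hempty | ⟨a, ha⟩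
  · simp [hempty]
  · simp only [S, mem_filter, mem_univ, true_and] at ha
    obtain ⟨hsmall, rfl⟩ := ha
    refine le_trans ?_ hsmall
    rw [← Set.ncard_coe_finset]
    exact Set.ncard_le_ncard fun x hx => by simp_all

theorem few_points_with_small_fibers_general {Fq K : Type*} [Field Fq] [Field K]
    [Fintype K] [Algebra Fq K] {n : ℕ} (f : Fin n → MvPolynomial (Fin n) Fq) (D k : ℕ)
    (Q : MvPolynomial (Fin n) Fq) (hQ0 : Q ≠ 0) (hQd : Q.totalDegree ≤ D)
    (hann : aeval f Q = 0) :
    letI F : (Fin n → K) → (Fin n → K) :=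
      fun a i => eval a ((f i).map (algebraMap Fq K))
    {a : Fin n → K | {x : Fin n → K | F x = F a}.ncard ≤ k}.ncard ≤
      k * D * Fintype.card K ^ (n - 1) := by
  classical
  set QK := Q.map (algebraMap Fq K)
  have hQK0 : QK ≠ 0 := by
    rwa [Ne, ← map_zero (map (algebraMap Fq K)),
      (map_injective _ (algebraMap Fq K).injective).eq_iff]
  have hQKd : QK.totalDegree ≤ D := (sup_mono (support_map_subset _ _)).trans hQd
  calc _ ≤ k * #{y : Fin n → K | eval y QK = 0} :=
        ncard_setOf_small_fibers_le
          (fun a => mem_filter.mpr ⟨mem_univ _, eval_map_eq_zero_of_aeval_eq_zero hann a⟩) k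
    _ ≤ k * (D * Fintype.card K ^ (n - 1)) := by
        gcongr
        exact (card_zeros_le_totalDegree_mul_card_pow hQK0).trans (by gcongr)
    _ = k * D * Fintype.card K ^ (n - 1) := (mul_assoc _ _ _).symm

/-- If `f 1, ..., f n` over `F_q` have a nonzero annihilator of degree at most `D`, then over an
extension `F_{q'}` and for `k > 0`, the number of points `a` whose fiber `f⁻¹(f(a))` has at most
`k` elements is at most `k · D · q'^(n-1)`. -/
theorem few_points_with_small_fibers {Fq K : Type*} [Field Fq] [Fintype Fq] [Field K]
    [Fintype K] [Algebra Fq K] {n : ℕ} (f : Fin n → MvPolynomial (Fin n) Fq) (D k : ℕ)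
    (hk : 0 < k) (Q : MvPolynomial (Fin n) Fq) (hQ0 : Q ≠ 0) (hQd : Q.totalDegree ≤ D)
    (hann : aeval f Q = 0) :
    letI F : (Fin n → K) → (Fin n → K) :=
      fun a i => eval a ((f i).map (algebraMap Fq K))
    {a : Fin n → K | {x : Fin n → K | F x = F a}.ncard ≤ k}.ncard ≤
      k * D * Fintype.card K ^ (n - 1) :=
  few_points_with_small_fibers_general f D k Q hQ0 hQd hann
end

section
/- Let A be an algebraically closed field, V ⊆ A^m an affine variety not containing the origin O, π: A^m → A^{k+1} a surjective linear map with kernel W, V_c and W_c the projective closures of V and W in P^m. If V_c ∩ W_c = ∅, then the origin O' of A^{k+1} does not lie in the Zariski closure of π(V). -/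
/-!
The common zeros in `A^(m+1)` of the homogeneous equations of `V_c` and of the linear forms
`π_i` (which cut out the cone over `W_c`) lie over `V_c ∩ W_c = ∅`, so only the origin remains.
By the Nullstellensatz every `x_j` has a power `x_j^(N+1)` in the ideal they generate; taking the
degree `N + 1` component and setting `x_0 = 1` gives `x_j^(N+1) ≡ ∑ c_i π_i` modulo `I(V)` with
`deg c_i ≤ N`. Hence `A[V]` is a finite module over `A[y_0, …, y_k]` via `π`, and by lying over
every point of the Zariski closure of `π(V)` is the image of a point of `V`. The origin is not,
since `V ∩ W = ∅`.
-/

open MvPolynomial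

variable {A : Type*} [Field A] {m : ℕ}

/-- `S ⊆ A^d` is Zariski closed. -/
def IsZClosed {d : ℕ} (S : Set (Fin d → A)) : Prop :=
  ∃ T : Set (MvPolynomial (Fin d) A), S = {x | ∀ p ∈ T, eval x p = 0}

/-- The Zariski closure of `S ⊆ A^d`. -/
def zClosure {d : ℕ} (S : Set (Fin d → A)) : Set (Fin d → A) :=
  {x | ∀ p : MvPolynomial (Fin d) A, (∀ y ∈ S, eval y p = 0) → eval x p = 0}

/-- An affine variety: irreducible Zariski closed set. -/
def IsZVariety {d : ℕ} (S : Set (Fin d → A)) : Prop :=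
  IsZClosed S ∧ S.Nonempty ∧ ∀ C₁ C₂ : Set (Fin d → A), IsZClosed C₁ → IsZClosed C₂ →
    S ⊆ C₁ ∪ C₂ → S ⊆ C₁ ∨ S ⊆ C₂

/-- Projective `m`-space over `A`. -/
abbrev ProjSpace (A : Type*) [Field A] (m : ℕ) :=
  Projectivization A (Fin (m + 1) → A)

/-- A Zariski closed subset of `P^m`: common zero set of homogeneous polynomials. -/
def IsPClosed (S : Set (ProjSpace A m)) : Prop :=
  ∃ T : Set (MvPolynomial (Fin (m + 1)) A),
    (∀ p ∈ T, ∃ k, p.IsHomogeneous k) ∧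
    S = {x | ∀ p ∈ T, ∀ v : Fin (m + 1) → A, (∃ hv : v ≠ 0, Projectivization.mk A v hv = x) →
      eval v p = 0}

/-- Embedding `A^m ⊆ P^m`, `x ↦ (1 : x)`. -/
noncomputable def affToProj (x : Fin m → A) : ProjSpace A m :=
  Projectivization.mk A (Fin.cons 1 x) (by
    intro h
    have := congrFun h 0
    simp at this)

/-- The projective closure of a subset of `A^m` in `P^m`. -/
def projClosure (S : Set (Fin m → A)) : Set (ProjSpace A m) :=
  ⋂₀ {C : Set (ProjSpace A m) | IsPClosed C ∧ affToProj '' S ⊆ C}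

namespace MvPolynomial

variable {R : Type*} [CommRing R] {σ τ ι : Type*} [Fintype ι]

theorem IsHomogeneous.eval_smul {p : MvPolynomial σ R} {n : ℕ} (hp : p.IsHomogeneous n)
    (c : R) (x : σ → R) : eval (c • x) p = c ^ n * eval x p := by
  rw [eval_eq, eval_eq, Finset.mul_sum]
  refine Finset.sum_congr rfl fun d hd => ?_
  have hdeg : ∑ i ∈ d.support, d i = n := by
    simpa [Finsupp.weight_apply, Finsupp.sum] using hp (mem_support_iff.mp hd)
  simp only [Pi.smul_apply, smul_eq_mul, mul_pow, Finset.prod_mul_distrib,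
    Finset.prod_pow_eq_pow_sum, hdeg]
  ring

theorem eval_aeval (g : σ → MvPolynomial τ R) (v : τ → R) (p : MvPolynomial σ R) :
    eval v (aeval g p) = eval (fun i => eval v (g i)) p := by
  rw [aeval_eq_bind₁]
  exact eval₂Hom_bind₁ _ _ _ _

theorem IsHomogeneous.homogeneousComponent_mul_of_le {q : MvPolynomial σ R} {d n : ℕ}
    (hq : q.IsHomogeneous d) (p : MvPolynomial σ R) (h : d ≤ n) :
    homogeneousComponent n (p * q) = homogeneousComponent (n - d) p * q := by
  let _ := gradedAlgebra (σ := σ) (R := R)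
  rw [← decomposition.decompose'_apply, ← decomposition.decompose'_apply]
  exact DirectSum.coe_decompose_mul_of_right_mem_of_le (homogeneousSubmodule σ R)
      ((mem_homogeneousSubmodule d q).mpr hq) h

theorem homogeneousComponent_mem_span {s : Set (MvPolynomial σ R)}
    (hs : ∀ p ∈ s, ∃ d, p.IsHomogeneous d) {p : MvPolynomial σ R} (hp : p ∈ Ideal.span s)
    (n : ℕ) : homogeneousComponent n p ∈ Ideal.span s := by
  let _ := gradedAlgebra (σ := σ) (R := R)
  refine homogeneousComponent_mem_of_mem (Ideal.homogeneous_span _ s fun q hq => ?_) hp n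
  obtain ⟨d, hd⟩ := hs q hq
  exact ⟨d, (mem_homogeneousSubmodule d q).mpr hd⟩

theorem totalDegree_aeval_le {g : σ → MvPolynomial τ R} (hg : ∀ i, (g i).totalDegree ≤ 1)
    (p : MvPolynomial σ R) : (aeval g p).totalDegree ≤ p.totalDegree := by
  rw [aeval_def, eval₂_eq]
  refine (totalDegree_finsetSum _ _).trans (Finset.sup_le fun d hd => ?_)
  refine (totalDegree_mul _ _).trans ?_
  rw [algebraMap_eq, totalDegree_C, zero_add]
  refine (totalDegree_finsetProd _ _).trans ((Finset.sum_le_sum fun i _ => ?_).trans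
    (le_totalDegree hd))
  calc (g i ^ d i).totalDegree ≤ d i * (g i).totalDegree := totalDegree_pow _ _
    _ ≤ d i := by simpa using Nat.mul_le_mul_left (d i) (hg i)

theorem IsHomogeneous.eval_cons_eq_zero {K : Type*} [Field K] [Infinite K] {m n : ℕ}
    {p : MvPolynomial (Fin (m + 1)) K} (hp : p.IsHomogeneous n) {x : Fin m → K}
    (hx : ∀ c : K, c ≠ 0 → eval (Fin.cons 1 (c • x)) p = 0) (t : K) :
    eval (Fin.cons t x) p = 0 := by
  set Q := Polynomial.map (eval x) (finSuccEquiv K m p)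
  have hQ : ∀ s, Q.eval s = eval (Fin.cons s x) p := fun s => (eval_eq_eval_mv_eval' x s p).symm
  suffices Q = 0 by rw [← hQ, this, Polynomial.eval_zero]
  refine Polynomial.eq_zero_of_infinite_isRoot Q (Set.infinite_of_finite_compl ?_)
  refine (Set.finite_singleton 0).subset fun s (hs : ¬Q.IsRoot s) => ?_
  by_contra h0
  replace h0 : s ≠ 0 := h0
  have hcons : (Fin.cons s x : Fin (m + 1) → K) = s • Fin.cons 1 (s⁻¹ • x) := by
    ext i
    refine Fin.cases ?_ (fun j => ?_) i <;> simp [h0]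
  exact hs (by rw [Polynomial.IsRoot, hQ, hcons, hp.eval_smul, hx _ (inv_ne_zero h0), mul_zero])

theorem X_mem_radical_of_zeroLocus_subset {K : Type*} [Field K] [IsAlgClosed K] [Finite σ]
    {J : Ideal (MvPolynomial σ K)} (hJ : zeroLocus K J ⊆ {0}) (j : σ) : X j ∈ J.radical := by
  rw [← vanishingIdeal_zeroLocus_eq_radical (K := K)]
  exact mem_vanishingIdeal_iff.mpr fun x hx => by rw [Set.mem_singleton_iff.mp (hJ hx)]; simp

theorem exists_monomial_sub_sum_mul_mem {F : ι → MvPolynomial σ R} {I : Ideal (MvPolynomial σ R)}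
    {j : σ} {N : ℕ} {c : ι → MvPolynomial σ R} (hc : ∀ i, (c i).totalDegree ≤ N)
    (hrel : X j ^ (N + 1) - ∑ i, c i * F i ∈ I) {e : σ →₀ ℕ} (he : N < e j) :
    ∃ b : ι → MvPolynomial σ R,
      (∀ i, (b i).totalDegree < e.degree) ∧ monomial e 1 - ∑ i, b i * F i ∈ I := by
  set e' := e - Finsupp.single j (N + 1)
  have he' : e = e' + Finsupp.single j (N + 1) :=
    (tsub_add_cancel_of_le (Finsupp.single_le_iff.mpr he)).symm
  refine ⟨fun i => c i * monomial e' 1, fun i => ?_, ?_⟩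
  · show (c i * monomial e' 1).totalDegree < e.degree
    have hdeg : e.degree = e'.degree + (N + 1) := by rw [he', map_add, Finsupp.degree_single]
    have : (c i * monomial e' 1).totalDegree ≤ N + e'.degree :=
      (totalDegree_mul _ _).trans (add_le_add (hc i) (totalDegree_monomial_le e' 1))
    omega
  · have hsplit : monomial e (1 : R) - ∑ i, c i * monomial e' 1 * F i
        = monomial e' 1 * (X j ^ (N + 1) - ∑ i, c i * F i) := by
      have hmono : monomial e (1 : R) = monomial e' 1 * X j ^ (N + 1) := by
        rw [X_pow_eq_monomial, monomial_mul, one_mul, ← he']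
      rw [hmono, mul_sub, Finset.mul_sum]
      congr 1
      exact Finset.sum_congr rfl fun i _ => by ring
    rw [hsplit]
    exact I.mul_mem_left _ hrel

theorem finite_mk_comp_aeval_of_pow_X_sub_mem [Finite σ] (F : ι → MvPolynomial σ R)
    (I : Ideal (MvPolynomial σ R))
    (h : ∀ j, ∃ (N : ℕ) (c : ι → MvPolynomial σ R), (∀ i, (c i).totalDegree ≤ N) ∧
      X j ^ (N + 1) - ∑ i, c i * F i ∈ I) :
    ((Ideal.Quotient.mk I).comp (aeval (R := R) F).toRingHom).Finite := by
  classical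
  choose N c hc hrel using h
  let φ := (Ideal.Quotient.mk I).comp (aeval (R := R) F).toRingHom
  let _ := φ.toAlgebra
  let _ : Module (MvPolynomial ι R) (MvPolynomial σ R ⧸ I) := Algebra.toModule
  have smul_eq (q : MvPolynomial ι R) (z : MvPolynomial σ R ⧸ I) :
      q • z = Ideal.Quotient.mk I (aeval F q) * z := rfl
  let M := Submodule.span (MvPolynomial ι R)
    ((fun e => Ideal.Quotient.mk I (monomial e 1)) '' Set.Iic (Finsupp.equivFunOnFinite.symm N))
  have of_monomials (q : MvPolynomial σ R)
      (hq : ∀ e ∈ q.support, Ideal.Quotient.mk I (monomial e 1) ∈ M) :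
      Ideal.Quotient.mk I q ∈ M := by
    rw [q.as_sum, map_sum]
    refine Submodule.sum_mem _ fun e he => ?_
    have : Ideal.Quotient.mk I (monomial e (coeff e q))
        = (C (coeff e q) : MvPolynomial ι R) • Ideal.Quotient.mk I (monomial e 1) := by
      rw [smul_eq, aeval_C, ← map_mul, algebraMap_eq, C_mul_monomial, mul_one]
    rw [this]
    exact M.smul_mem _ (hq e he)
  have monomial_mem (d : ℕ) (e : σ →₀ ℕ) (hd : e.degree = d) :
      Ideal.Quotient.mk I (monomial e 1) ∈ M := by
    induction d using Nat.strong_induction_on generalizing e with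
    | _ d IH =>
    by_cases he : e ≤ Finsupp.equivFunOnFinite.symm N
    · exact Submodule.subset_span ⟨e, he, rfl⟩
    obtain ⟨j, hj⟩ : ∃ j, N j < e j := by simpa [Finsupp.le_def] using he
    obtain ⟨b, hb, hmem⟩ := exists_monomial_sub_sum_mul_mem (hc j) (hrel j) hj
    rw [Ideal.Quotient.eq.mpr hmem, map_sum]
    refine Submodule.sum_mem _ fun i _ => ?_
    have : Ideal.Quotient.mk I (b i * F i)
        = (X i : MvPolynomial ι R) • Ideal.Quotient.mk I (b i) := by
      rw [smul_eq, aeval_X, map_mul, mul_comm]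
    rw [this]
    exact M.smul_mem _ <| of_monomials _ fun e' he' =>
      IH _ (hd ▸ (le_totalDegree he').trans_lt (hb i)) e' rfl
  have hM : M = ⊤ := by
    refine eq_top_iff.mpr fun z _ => ?_
    obtain ⟨q, rfl⟩ := Ideal.Quotient.mk_surjective z
    exact of_monomials q fun e _ => monomial_mem _ e rfl
  exact ⟨Submodule.fg_def.mpr ⟨_, (Set.finite_Iic _).image _, hM⟩⟩

end MvPolynomial

theorem IsZClosed.zClosure_subset {d : ℕ} {S : Set (Fin d → A)} (hS : IsZClosed S) :
    zClosure S ⊆ S := by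
  obtain ⟨T, rfl⟩ := hS
  exact fun x hx p hp => hx p fun y hy => hy p hp

theorem mem_image_of_mem_zClosure_of_finite [IsAlgClosed A] {n : ℕ} {V : Set (Fin m → A)}
    (hV : IsZClosed V) (F : Fin n → MvPolynomial (Fin m) A)
    (hF : ((Ideal.Quotient.mk (vanishingIdeal A V)).comp (aeval (R := A) F).toRingHom).Finite)
    {y : Fin n → A} (hy : y ∈ zClosure ((fun v i => eval v (F i)) '' V)) :
    ∃ v ∈ V, (fun i => eval v (F i)) = y := by
  set I := vanishingIdeal A V
  let φ := (Ideal.Quotient.mk I).comp (aeval (R := A) F).toRingHom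
  let _ := φ.toAlgebra
  let _ : Module (MvPolynomial (Fin n) A) (MvPolynomial (Fin m) A ⧸ I) := Algebra.toModule
  have : Module.Finite (MvPolynomial (Fin n) A) (MvPolynomial (Fin m) A ⧸ I) := hF
  have := Algebra.IsIntegral.of_finite (MvPolynomial (Fin n) A) (MvPolynomial (Fin m) A ⧸ I)
  have hker : RingHom.ker φ ≤ vanishingIdeal A {y} := by
    intro q hq
    have hqI : aeval F q ∈ I := Ideal.Quotient.eq_zero_iff_mem.mp hq
    refine (mem_vanishingIdeal_singleton_iff y q).mpr (hy q ?_)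
    rintro _ ⟨v, hv, rfl⟩
    exact (eval_aeval F v q).symm.trans (mem_vanishingIdeal_iff.mp hqI v hv)
  obtain ⟨P, hP, hPy⟩ := Ideal.exists_ideal_over_maximal_of_isIntegral _ hker
  have : (P.comap (Ideal.Quotient.mk I)).IsMaximal :=
    Ideal.comap_isMaximal_of_surjective _ Ideal.Quotient.mk_surjective
  obtain ⟨v, hv⟩ := isMaximal_iff_eq_vanishingIdeal_singleton.mp this
  have hvanish : ∀ p, Ideal.Quotient.mk I p ∈ P → eval v p = 0 := fun p hp =>
    (mem_vanishingIdeal_singleton_iff v p).mp (hv ▸ hp)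
  refine ⟨v, hV.zClosure_subset fun p hp => hvanish p ?_, funext fun i => ?_⟩
  · rw [Ideal.Quotient.eq_zero_iff_mem.mpr (mem_vanishingIdeal_iff.mpr hp)]
    exact P.zero_mem
  · have hXi : X i - C (y i) ∈ P.comap (algebraMap _ _) := by
      rw [hPy, mem_vanishingIdeal_singleton_iff]
      simp
    have hφ : φ (X i - C (y i)) = Ideal.Quotient.mk I (F i - C (y i)) := by
      simp [φ]
    have hzero := hvanish (F i - C (y i)) (hφ ▸ hXi)
    simpa [sub_eq_zero] using hzero

theorem affToProj_mem_projClosure {S : Set (Fin m → A)} {x : Fin m → A} (hx : x ∈ S) :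
    affToProj x ∈ projClosure S :=
  fun _ hC => hC.2 ⟨x, hx, rfl⟩

def homogeneousVanishing (S : Set (Fin m → A)) : Set (MvPolynomial (Fin (m + 1)) A) :=
  {p | (∃ n, p.IsHomogeneous n) ∧ ∀ v ∈ S, eval (Fin.cons 1 v) p = 0}

theorem mk_mem_projClosure {S : Set (Fin m → A)} {u : Fin (m + 1) → A} (hu : u ≠ 0)
    (h : ∀ p ∈ homogeneousVanishing S, eval u p = 0) :
    Projectivization.mk A u hu ∈ projClosure S := by
  rintro _ ⟨⟨T, hT, rfl⟩, hST⟩ p hp v ⟨hv, hvu⟩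
  obtain ⟨n, hn⟩ := hT p hp
  obtain ⟨c, rfl⟩ := (Projectivization.mk_eq_mk_iff' A v u hv hu).mp hvu
  rw [hn.eval_smul, h p ⟨⟨n, hn⟩, fun w hw => hST ⟨w, hw, rfl⟩ p hp _ ⟨_, rfl⟩⟩, mul_zero]

theorem mk_mem_projClosure_of_tail_mem [Infinite A] (W : Submodule A (Fin m → A))
    {u : Fin (m + 1) → A} (hu : u ≠ 0) (hW : Fin.tail u ∈ W) :
    Projectivization.mk A u hu ∈ projClosure (W : Set (Fin m → A)) := by
  refine mk_mem_projClosure hu fun p ⟨⟨n, hn⟩, hp⟩ => ?_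
  rw [← Fin.cons_self_tail u]
  exact hn.eval_cons_eq_zero (fun c _ => hp _ (W.smul_mem c hW)) _

noncomputable def coordPoly {k : ℕ} (π : (Fin m → A) →ₗ[A] (Fin k → A)) (i : Fin k) :
    MvPolynomial (Fin m) A :=
  ∑ j, C (π (Pi.single j 1) i) * X j

theorem eval_coordPoly {k : ℕ} (π : (Fin m → A) →ₗ[A] (Fin k → A)) (v : Fin m → A)
    (i : Fin k) : eval v (coordPoly π i) = π v i := by
  conv_rhs => rw [← Finset.univ_sum_single v]
  simp only [coordPoly, map_sum, map_mul, eval_C, eval_X, Finset.sum_apply]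
  refine Finset.sum_congr rfl fun j _ => ?_
  have : Pi.single j (v j) = v j • Pi.single j (1 : A) := by
    rw [← Pi.single_smul', smul_eq_mul, mul_one]
  rw [this, map_smul, Pi.smul_apply, smul_eq_mul, mul_comm]

theorem isHomogeneous_coordPoly {k : ℕ} (π : (Fin m → A) →ₗ[A] (Fin k → A)) (i : Fin k) :
    (coordPoly π i).IsHomogeneous 1 :=
  IsHomogeneous.sum _ _ _ fun j _ => isHomogeneous_C_mul_X _ j

noncomputable def dehomogenize : MvPolynomial (Fin (m + 1)) A →ₐ[A] MvPolynomial (Fin m) A :=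
  aeval (Fin.cons 1 X)

theorem eval_dehomogenize (v : Fin m → A) (p : MvPolynomial (Fin (m + 1)) A) :
    eval v (dehomogenize p) = eval (Fin.cons 1 v) p := by
  have : (fun i => eval v ((Fin.cons 1 X : Fin (m + 1) → MvPolynomial (Fin m) A) i))
      = Fin.cons 1 v := by
    ext i
    refine Fin.cases ?_ (fun j => ?_) i <;> simp
  rw [dehomogenize, eval_aeval, this]

theorem dehomogenize_rename_succ (p : MvPolynomial (Fin m) A) :
    dehomogenize (rename Fin.succ p) = p := by
  rw [dehomogenize, aeval_rename]
  convert aeval_X_left_apply p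
  ext1 j
  simp

theorem totalDegree_dehomogenize_le (p : MvPolynomial (Fin (m + 1)) A) :
    (dehomogenize p).totalDegree ≤ p.totalDegree :=
  totalDegree_aeval_le (Fin.cases (by simp) fun j => by simp) p

theorem dehomogenize_mem_vanishingIdeal {S : Set (Fin m → A)} {p : MvPolynomial (Fin (m + 1)) A}
    (hp : p ∈ Ideal.span (homogeneousVanishing S)) : dehomogenize p ∈ vanishingIdeal A S := by
  refine (Ideal.span_le (I := (vanishingIdeal A S).comap dehomogenize)).mpr (fun q hq => ?_) hp
  exact mem_vanishingIdeal_iff.mpr fun v hv => (eval_dehomogenize v q).trans (hq.2 v hv)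

theorem exists_pow_X_sub_mem_vanishingIdeal {n : ℕ} {V : Set (Fin m → A)}
    {F : Fin n → MvPolynomial (Fin m) A} (hF : ∀ i, (F i).IsHomogeneous 1) {j : Fin m}
    (hj : X j.succ ∈
      (Ideal.span (homogeneousVanishing V ∪ Set.range fun i => rename Fin.succ (F i))).radical) :
    ∃ (N : ℕ) (c : Fin n → MvPolynomial (Fin m) A), (∀ i, (c i).totalDegree ≤ N) ∧
      X j ^ (N + 1) - ∑ i, c i * F i ∈ vanishingIdeal A V := by
  obtain ⟨N, hN⟩ := hj
  replace hN := Ideal.mul_mem_right (X j.succ) _ hN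
  rw [← pow_succ, Ideal.span_union, Submodule.mem_sup] at hN
  obtain ⟨a, ha, b, hb, hab⟩ := hN
  obtain ⟨c, rfl⟩ := Ideal.mem_span_range_iff_exists_fun.mp hb
  have hdeg : X j.succ ^ (N + 1) = homogeneousComponent (N + 1) a
      + ∑ i, homogeneousComponent N (c i) * rename Fin.succ (F i) := by
    have hX : (X j.succ ^ (N + 1) : MvPolynomial (Fin (m + 1)) A).IsHomogeneous (N + 1) := by
      simpa using (isHomogeneous_X A j.succ).pow (N + 1)
    have := congrArg (homogeneousComponent (N + 1)) hab
    rw [homogeneousComponent_of_mem ((mem_homogeneousSubmodule _ _).mpr hX), if_pos rfl, map_add,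
      map_sum] at this
    rw [← this]
    congr 1
    refine Finset.sum_congr rfl fun i _ => ?_
    simpa only [Nat.add_sub_cancel] using
      (hF i).rename_isHomogeneous.homogeneousComponent_mul_of_le (c i) (Nat.le_add_left 1 N)
  refine ⟨N, fun i => dehomogenize (homogeneousComponent N (c i)), fun i => ?_, ?_⟩
  · exact (totalDegree_dehomogenize_le _).trans
      (homogeneousComponent_isHomogeneous N (c i)).totalDegree_le
  · have := congrArg dehomogenize hdeg
    rw [map_pow, ← rename_X, dehomogenize_rename_succ, map_add, map_sum] at this
    simp only [map_mul, dehomogenize_rename_succ] at this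
    rw [this, add_sub_cancel_right]
    exact dehomogenize_mem_vanishingIdeal
      (homogeneousComponent_mem_span (fun p hp => hp.1) ha (N + 1))

theorem zeroLocus_subset_zero_of_projClosure_disjoint [Infinite A] {k : ℕ} {V : Set (Fin m → A)}
    {π : (Fin m → A) →ₗ[A] (Fin k → A)}
    (hdisj : projClosure V ∩ projClosure (LinearMap.ker π : Set (Fin m → A)) = ∅) :
    zeroLocus A (Ideal.span
      (homogeneousVanishing V ∪ Set.range fun i => rename Fin.succ (coordPoly π i))) ⊆ {0} := by
  intro u hu
  rw [zeroLocus_span] at hu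
  by_contra hu0
  have hker : Fin.tail u ∈ LinearMap.ker π := LinearMap.mem_ker.mpr <| funext fun i => by
    rw [← eval_coordPoly, Pi.zero_apply, ← hu _ (Or.inr ⟨i, rfl⟩)]
    exact (eval_rename _ _ _).symm
  exact Set.eq_empty_iff_forall_notMem.mp hdisj _
    ⟨mk_mem_projClosure hu0 fun p hp => hu p (Or.inl hp), mk_mem_projClosure_of_tail_mem _ hu0 hker⟩

theorem origin_not_in_closure_of_proj_disjoint_general [IsAlgClosed A] {k : ℕ}
    (V : Set (Fin m → A)) (hV : IsZVariety V)
    (π : (Fin m → A) →ₗ[A] (Fin (k + 1) → A))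
    (hdisj : projClosure V ∩ projClosure (LinearMap.ker π : Set (Fin m → A)) = ∅) :
    (0 : Fin (k + 1) → A) ∉ zClosure (π '' V) := by
  intro h0
  have hrad := X_mem_radical_of_zeroLocus_subset
    (zeroLocus_subset_zero_of_projClosure_disjoint hdisj)
  have hfin := finite_mk_comp_aeval_of_pow_X_sub_mem (coordPoly π) (vanishingIdeal A V) fun j =>
    exists_pow_X_sub_mem_vanishingIdeal (isHomogeneous_coordPoly π) (hrad j.succ)
  have hπ : (fun v i => eval v (coordPoly π i)) = π := funext fun v => funext (eval_coordPoly π v)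
  obtain ⟨v, hv, hπv⟩ := mem_image_of_mem_zClosure_of_finite hV.1 _ hfin (hπ ▸ h0)
  have hker : v ∈ LinearMap.ker π := (congrFun hπ v).symm.trans hπv
  exact Set.eq_empty_iff_forall_notMem.mp hdisj _
    ⟨affToProj_mem_projClosure hv, affToProj_mem_projClosure hker⟩

/-- If the projective closures of an affine variety `V` (not containing the origin) and of the
kernel `W` of a surjective linear map `π : A^m → A^(k+1)` are disjoint, then the origin of
`A^(k+1)` is not in the Zariski closure of `π(V)`. -/
theorem origin_not_in_closure_of_proj_disjoint [IsAlgClosed A] {k : ℕ}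
    (V : Set (Fin m → A)) (hV : IsZVariety V) (hO : (0 : Fin m → A) ∉ V)
    (π : (Fin m → A) →ₗ[A] (Fin (k + 1) → A)) (hπ : Function.Surjective π)
    (hdisj : projClosure V ∩ projClosure (LinearMap.ker π : Set (Fin m → A)) = ∅) :
    (0 : Fin (k + 1) → A) ∉ zClosure (π '' V) :=
  origin_not_in_closure_of_proj_disjoint_general V hV π hdisj
end
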